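/- If the indexed nested sequent ∅⊢∅,[Υ1]^{i1},…,[Υn]^{in} (whose root node has empty antecedent and succedent and carries the indexed nestings [Υ1]^{i1},…,[Υn]^{in}) is derivable in NS_(N,⪯,F), then the indexed nested sequent ∅⊢∅,[Υk]^{ik} is derivable in NS_(N,⪯,F) for some k∈{1,…,n}. -/

import Mathlib

/-- The modal axioms D, T and 4. -/
inductive MAx : Type
  | d | t | four
  deriving DecidableEq

/-- A description `(N, ⪯, F)` of a simply dependent multimodal logic:
`N` is a finite set of natural numbers, `⪯` (written `le`) is a partial order
on `N`, and `F` maps each index to a subset of `{D, T, 4}`; the description is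
transitive-closed. -/
structure SDM where
  N : Finset ℕ
  le : ℕ → ℕ → Prop
  F : ℕ → Finset MAx
  le_refl : ∀ i ∈ N, le i i
  le_trans : ∀ i ∈ N, ∀ j ∈ N, ∀ k ∈ N, le i j → le j k → le i k
  le_antisymm : ∀ i ∈ N, ∀ j ∈ N, le i j → le j i → i = j
  transClosed : ∀ i ∈ N, ∀ j ∈ N, le j i → MAx.four ∈ F j → MAx.four ∈ F i

/-- Classical propositional formulas extended with modalities `□_i`. -/
inductive MForm : Type
  | atom : ℕ → MForm
  | bot  : MForm
  | and  : MForm → MForm → MForm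
  | or   : MForm → MForm → MForm
  | imp  : MForm → MForm → MForm
  | box  : ℕ → MForm → MForm

/-- Indexed nested sequents: trees of two-sided sequents of finite multisets
in which every nesting carries an index. -/
inductive INS : Type
  | node : Multiset MForm → Multiset MForm → List (ℕ × INS) → INS

/-- A context selecting one node inside an indexed nested sequent. -/
inductive ICtx : Type
  | hole : ICtx
  | child : Multiset MForm → Multiset MForm → List (ℕ × INS) → ℕ → ICtx →
      List (ℕ × INS) → ICtx

def ICtx.fill : ICtx → INS → INS
  | .hole, t => t
  | .child Γ Δ L₁ i C L₂, t => .node Γ Δ (L₁ ++ (i, C.fill t) :: L₂)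

/-- Derivability in the indexed nested system `NS_(N,⪯,F)`, indexed by the
height of the derivation; rules may be applied at any node. -/
inductive INSDeriv (D : SDM) : ℕ → INS → Prop
  | init (C : ICtx) (Γ Δ : Multiset MForm) (Λ : List (ℕ × INS)) (p : ℕ) :
      INSDeriv D 0 (C.fill (.node (MForm.atom p ::ₘ Γ) (MForm.atom p ::ₘ Δ) Λ))
  | botL (C : ICtx) (Γ Δ : Multiset MForm) (Λ : List (ℕ × INS)) :
      INSDeriv D 0 (C.fill (.node (MForm.bot ::ₘ Γ) Δ Λ))
  | andL {n : ℕ} (C : ICtx) (Γ Δ : Multiset MForm) (Λ : List (ℕ × INS)) (A B : MForm) :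
      INSDeriv D n (C.fill (.node (A ::ₘ B ::ₘ Γ) Δ Λ)) →
      INSDeriv D (n + 1) (C.fill (.node (A.and B ::ₘ Γ) Δ Λ))
  | andR {n m : ℕ} (C : ICtx) (Γ Δ : Multiset MForm) (Λ : List (ℕ × INS)) (A B : MForm) :
      INSDeriv D n (C.fill (.node Γ (A ::ₘ Δ) Λ)) →
      INSDeriv D m (C.fill (.node Γ (B ::ₘ Δ) Λ)) →
      INSDeriv D (max n m + 1) (C.fill (.node Γ (A.and B ::ₘ Δ) Λ))
  | orL {n m : ℕ} (C : ICtx) (Γ Δ : Multiset MForm) (Λ : List (ℕ × INS)) (A B : MForm) :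
      INSDeriv D n (C.fill (.node (A ::ₘ Γ) Δ Λ)) →
      INSDeriv D m (C.fill (.node (B ::ₘ Γ) Δ Λ)) →
      INSDeriv D (max n m + 1) (C.fill (.node (A.or B ::ₘ Γ) Δ Λ))
  | orR {n : ℕ} (C : ICtx) (Γ Δ : Multiset MForm) (Λ : List (ℕ × INS)) (A B : MForm) :
      INSDeriv D n (C.fill (.node Γ (A ::ₘ B ::ₘ Δ) Λ)) →
      INSDeriv D (n + 1) (C.fill (.node Γ (A.or B ::ₘ Δ) Λ))
  | impL {n m : ℕ} (C : ICtx) (Γ Δ : Multiset MForm) (Λ : List (ℕ × INS)) (A B : MForm) :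
      INSDeriv D n (C.fill (.node Γ (A ::ₘ Δ) Λ)) →
      INSDeriv D m (C.fill (.node (B ::ₘ Γ) Δ Λ)) →
      INSDeriv D (max n m + 1) (C.fill (.node (A.imp B ::ₘ Γ) Δ Λ))
  | impR {n : ℕ} (C : ICtx) (Γ Δ : Multiset MForm) (Λ : List (ℕ × INS)) (A B : MForm) :
      INSDeriv D n (C.fill (.node (A ::ₘ Γ) (B ::ₘ Δ) Λ)) →
      INSDeriv D (n + 1) (C.fill (.node Γ (A.imp B ::ₘ Δ) Λ))
  | boxR {n : ℕ} (C : ICtx) (Γ Δ : Multiset MForm) (Λ : List (ℕ × INS)) (i : ℕ) (A : MForm) :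
      i ∈ D.N →
      INSDeriv D n (C.fill (.node Γ Δ (Λ ++ [(i, INS.node 0 {A} [])]))) →
      INSDeriv D (n + 1) (C.fill (.node Γ (MForm.box i A ::ₘ Δ) Λ))
  | boxL {n : ℕ} (C : ICtx) (Γ Δ S P : Multiset MForm)
      (Λ₁ Λ₂ Λ' : List (ℕ × INS)) (i j : ℕ) (A : MForm) :
      i ∈ D.N → j ∈ D.N → D.le j i →
      INSDeriv D n (C.fill (.node (MForm.box i A ::ₘ Γ) Δ
        (Λ₁ ++ (j, INS.node (A ::ₘ S) P Λ') :: Λ₂))) →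
      INSDeriv D (n + 1) (C.fill (.node (MForm.box i A ::ₘ Γ) Δ
        (Λ₁ ++ (j, INS.node S P Λ') :: Λ₂)))
  | dRule {n : ℕ} (C : ICtx) (Γ Δ : Multiset MForm) (Λ : List (ℕ × INS)) (i j : ℕ) (A : MForm) :
      i ∈ D.N → j ∈ D.N → D.le j i → MAx.d ∈ D.F i →
      INSDeriv D n (C.fill (.node (MForm.box i A ::ₘ Γ) Δ (Λ ++ [(j, INS.node {A} 0 [])]))) →
      INSDeriv D (n + 1) (C.fill (.node (MForm.box i A ::ₘ Γ) Δ Λ))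
  | tRule {n : ℕ} (C : ICtx) (Γ Δ : Multiset MForm) (Λ : List (ℕ × INS)) (i : ℕ) (A : MForm) :
      i ∈ D.N → MAx.t ∈ D.F i →
      INSDeriv D n (C.fill (.node (MForm.box i A ::ₘ A ::ₘ Γ) Δ Λ)) →
      INSDeriv D (n + 1) (C.fill (.node (MForm.box i A ::ₘ Γ) Δ Λ))
  | fourRule {n : ℕ} (C : ICtx) (Γ Δ S P : Multiset MForm)
      (Λ₁ Λ₂ Λ' : List (ℕ × INS)) (i j : ℕ) (A : MForm) :
      i ∈ D.N → j ∈ D.N → D.le j i → MAx.four ∈ D.F i →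
      INSDeriv D n (C.fill (.node (MForm.box i A ::ₘ Γ) Δ
        (Λ₁ ++ (j, INS.node (MForm.box i A ::ₘ S) P Λ') :: Λ₂))) →
      INSDeriv D (n + 1) (C.fill (.node (MForm.box i A ::ₘ Γ) Δ
        (Λ₁ ++ (j, INS.node S P Λ') :: Λ₂)))

/-!
Every rule has a principal formula at the node it acts on, so no rule acts on the empty root
`∅ ⊢ ∅`: each step of a derivation of `∅ ⊢ ∅, [Υ₁]^{i₁}, …, [Υₙ]^{iₙ}` acts inside a single
nesting `[Υₖ]^{iₖ}` and leaves the others unchanged. Inductively, each premise yields a derivable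
single nesting; if for some premise it is not the active one, it is a nesting of the conclusion
too, and otherwise the same rule derives `∅ ⊢ ∅, [Υₖ]^{iₖ}` from the premises cut down to their
active nesting.
-/

def Derivable (D : SDM) (t : INS) : Prop := ∃ n, INSDeriv D n t

def EmptyRootSplits (D : SDM) (t : INS) : Prop :=
  ∀ L, t = .node 0 0 L → ∃ G ∈ L, Derivable D (.node 0 0 [G])

lemma ICtx.fill_eq_node_zero_zero {C : ICtx} {s : INS} {L : List (ℕ × INS)}
    (hs : ∀ Λ, s ≠ .node 0 0 Λ) (h : C.fill s = .node 0 0 L) :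
    ∃ (L₁ : List (ℕ × INS)) (k : ℕ) (C' : ICtx) (L₂ : List (ℕ × INS)),
      L = L₁ ++ (k, C'.fill s) :: L₂ ∧
      ∀ t, C.fill t = .node 0 0 (L₁ ++ (k, C'.fill t) :: L₂) := by
  cases C with
  | hole => exact absurd h (hs L)
  | child Γ Δ L₁ k C' L₂ =>
    simp only [ICtx.fill, INS.node.injEq] at h
    obtain ⟨rfl, rfl, rfl⟩ := h
    exact ⟨L₁, k, C', L₂, rfl, fun _ => rfl⟩

lemma emptyRootSplits_of_rule {D : SDM} {C : ICtx} {s : INS} {ps : List INS}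
    (hs : ∀ Λ, s ≠ .node 0 0 Λ)
    (rule : ∀ C : ICtx, (∀ p ∈ ps, Derivable D (C.fill p)) → Derivable D (C.fill s))
    (ih : ∀ p ∈ ps, EmptyRootSplits D (C.fill p)) :
    EmptyRootSplits D (C.fill s) := by
  intro L hL
  obtain ⟨L₁, k, C', L₂, rfl, hfill⟩ := ICtx.fill_eq_node_zero_zero hs hL
  by_cases hside : ∃ G ∈ L₁ ++ L₂, Derivable D (.node 0 0 [G])
  · obtain ⟨G, hG, hd⟩ := hside
    exact ⟨G, by grind, hd⟩
  · refine ⟨(k, C'.fill s), by simp, rule (.child 0 0 [] k C' []) fun p hp => ?_⟩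
    obtain ⟨G, hG, hd⟩ := ih p hp _ (hfill p)
    obtain hG | rfl | hG : G ∈ L₁ ∨ G = (k, C'.fill p) ∨ G ∈ L₂ := by simpa using hG
    · exact absurd ⟨G, by simp [hG], hd⟩ hside
    · exact hd
    · exact absurd ⟨G, by simp [hG], hd⟩ hside

lemma emptyRootSplits_of_deriv {D : SDM} {n : ℕ} {t : INS} (h : INSDeriv D n t) :
    EmptyRootSplits D t := by
  induction h with
  | init C Γ Δ Λ p =>
    exact emptyRootSplits_of_rule (ps := []) (by simp) (fun C _ => ⟨0, .init C Γ Δ Λ p⟩) (by simp)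
  | botL C Γ Δ Λ =>
    exact emptyRootSplits_of_rule (ps := []) (by simp) (fun C _ => ⟨0, .botL C Γ Δ Λ⟩) (by simp)
  | andL C Γ Δ Λ A B _ ih =>
    exact emptyRootSplits_of_rule (ps := [_]) (by simp)
      (fun C hp => let ⟨_, h⟩ := hp _ (by simp); ⟨_, .andL C Γ Δ Λ A B h⟩) (List.forall_mem_singleton.2 ih)
  | andR C Γ Δ Λ A B _ _ ih₁ ih₂ =>
    exact emptyRootSplits_of_rule (ps := [_, _]) (by simp)
      (fun C hp => let ⟨_, h₁⟩ := hp _ (by simp); let ⟨_, h₂⟩ := hp _ (by simp)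
        ⟨_, .andR C Γ Δ Λ A B h₁ h₂⟩) (List.forall_mem_cons.2 ⟨ih₁, List.forall_mem_singleton.2 ih₂⟩)
  | orL C Γ Δ Λ A B _ _ ih₁ ih₂ =>
    exact emptyRootSplits_of_rule (ps := [_, _]) (by simp)
      (fun C hp => let ⟨_, h₁⟩ := hp _ (by simp); let ⟨_, h₂⟩ := hp _ (by simp)
        ⟨_, .orL C Γ Δ Λ A B h₁ h₂⟩) (List.forall_mem_cons.2 ⟨ih₁, List.forall_mem_singleton.2 ih₂⟩)
  | orR C Γ Δ Λ A B _ ih =>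
    exact emptyRootSplits_of_rule (ps := [_]) (by simp)
      (fun C hp => let ⟨_, h⟩ := hp _ (by simp); ⟨_, .orR C Γ Δ Λ A B h⟩) (List.forall_mem_singleton.2 ih)
  | impL C Γ Δ Λ A B _ _ ih₁ ih₂ =>
    exact emptyRootSplits_of_rule (ps := [_, _]) (by simp)
      (fun C hp => let ⟨_, h₁⟩ := hp _ (by simp); let ⟨_, h₂⟩ := hp _ (by simp)
        ⟨_, .impL C Γ Δ Λ A B h₁ h₂⟩) (List.forall_mem_cons.2 ⟨ih₁, List.forall_mem_singleton.2 ih₂⟩)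
  | impR C Γ Δ Λ A B _ ih =>
    exact emptyRootSplits_of_rule (ps := [_]) (by simp)
      (fun C hp => let ⟨_, h⟩ := hp _ (by simp); ⟨_, .impR C Γ Δ Λ A B h⟩) (List.forall_mem_singleton.2 ih)
  | boxR C Γ Δ Λ i A hi _ ih =>
    exact emptyRootSplits_of_rule (ps := [_]) (by simp)
      (fun C hp => let ⟨_, h⟩ := hp _ (by simp); ⟨_, .boxR C Γ Δ Λ i A hi h⟩) (List.forall_mem_singleton.2 ih)
  | boxL C Γ Δ S P Λ₁ Λ₂ Λ' i j A hi hj hji _ ih =>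
    exact emptyRootSplits_of_rule (ps := [_]) (by simp)
      (fun C hp => let ⟨_, h⟩ := hp _ (by simp)
        ⟨_, .boxL C Γ Δ S P Λ₁ Λ₂ Λ' i j A hi hj hji h⟩) (List.forall_mem_singleton.2 ih)
  | dRule C Γ Δ Λ i j A hi hj hji hd _ ih =>
    exact emptyRootSplits_of_rule (ps := [_]) (by simp)
      (fun C hp => let ⟨_, h⟩ := hp _ (by simp); ⟨_, .dRule C Γ Δ Λ i j A hi hj hji hd h⟩)
      (List.forall_mem_singleton.2 ih)
  | tRule C Γ Δ Λ i A hi ht _ ih =>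
    exact emptyRootSplits_of_rule (ps := [_]) (by simp)
      (fun C hp => let ⟨_, h⟩ := hp _ (by simp); ⟨_, .tRule C Γ Δ Λ i A hi ht h⟩) (List.forall_mem_singleton.2 ih)
  | fourRule C Γ Δ S P Λ₁ Λ₂ Λ' i j A hi hj hji h4 _ ih =>
    exact emptyRootSplits_of_rule (ps := [_]) (by simp)
      (fun C hp => let ⟨_, h⟩ := hp _ (by simp)
        ⟨_, .fourRule C Γ Δ S P Λ₁ Λ₂ Λ' i j A hi hj hji h4 h⟩) (List.forall_mem_singleton.2 ih)

/-- If the indexed nested sequent `∅ ⊢ ∅, [Υ₁]^{i₁}, …, [Υₙ]^{iₙ}` is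
derivable in `NS_(N,⪯,F)`, then `∅ ⊢ ∅, [Υₖ]^{iₖ}` is derivable in
`NS_(N,⪯,F)` for some `k ∈ {1,…,n}`. -/
theorem INS_nesting_disjunction :
    ∀ (D : SDM) (L : List (ℕ × INS)), (∃ n, INSDeriv D n (.node 0 0 L)) →
      ∃ G ∈ L, ∃ n, INSDeriv D n (.node 0 0 [G]) :=
  fun _ L ⟨_, h⟩ => emptyRootSplits_of_deriv h L rfl
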